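/- If T is a type II tensor (all positive boost-weight components vanish) of rank n and S is type II of rank m, then any single metric contraction of T ⊗ S (contracting one index of T against one index of S using the null-frame inverse metric g^{01}=g^{10}=−1, g^{ij}=δ^{ij}) is again type II. -/

import Mathlib

/-
Each term g^{pq} T(a',p) S(c',q) of the contraction vanishes. If g^{pq} ≠ 0 the contracted
indices have opposite boost weights, so bw(a',p) + bw(c',q) = bw a' + bw c' > 0; hence one of the
two factors has positive boost weight and is killed by the type II hypothesis.
-/

/-- Boost weight of an index tuple. -/
def bw {N n : ℕ} (a : Fin n → Fin N) : ℤ :=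
  ∑ i : Fin n, (if (a i : ℕ) = 0 then (1 : ℤ) else if (a i : ℕ) = 1 then -1 else 0)

/-- Inverse null-frame metric: g^{01} = g^{10} = -1, g^{ij} = δ^{ij} for spatial i,j. -/
def ginv {N : ℕ} (p q : Fin N) : ℝ :=
  if (p : ℕ) = 0 ∧ (q : ℕ) = 1 then -1
  else if (p : ℕ) = 1 ∧ (q : ℕ) = 0 then -1
  else if 2 ≤ (p : ℕ) ∧ p = q then 1 else 0

def indexWeight {N : ℕ} (p : Fin N) : ℤ :=
  if (p : ℕ) = 0 then 1 else if (p : ℕ) = 1 then -1 else 0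

lemma bw_snoc {N n : ℕ} (a : Fin n → Fin N) (p : Fin N) :
    bw (Fin.snoc a p) = bw a + indexWeight p := by
  simp [bw, indexWeight, Fin.sum_univ_castSucc]

lemma indexWeight_add_eq_zero_of_ginv_ne_zero {N : ℕ} {p q : Fin N} (h : ginv p q ≠ 0) :
    indexWeight p + indexWeight q = 0 := by
  unfold ginv at h
  unfold indexWeight
  split_ifs at h <;> grind

lemma mul_eq_zero_of_bw_snoc_add_pos {N n m : ℕ}
    {T : (Fin (n + 1) → Fin N) → ℝ} {S : (Fin (m + 1) → Fin N) → ℝ}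
    (hT : ∀ a, 0 < bw a → T a = 0) (hS : ∀ c, 0 < bw c → S c = 0)
    {a' : Fin n → Fin N} {c' : Fin m → Fin N} {p q : Fin N}
    (h : 0 < bw (Fin.snoc a' p) + bw (Fin.snoc c' q)) :
    T (Fin.snoc a' p) * S (Fin.snoc c' q) = 0 := by
  rcases lt_or_ge 0 (bw (Fin.snoc a' p)) with hp | hp
  · rw [hT _ hp, zero_mul]
  · rw [hS _ (by omega), mul_zero]

/-- A single metric contraction of a tensor product of two type II tensors is again
type II: the component at (a', c') of positive boost weight vanishes. -/
theorem typeII_single_contraction {N n m : ℕ}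
    (T : (Fin (n + 1) → Fin N) → ℝ) (S : (Fin (m + 1) → Fin N) → ℝ)
    (hT : ∀ a : Fin (n + 1) → Fin N, 0 < bw a → T a = 0)
    (hS : ∀ c : Fin (m + 1) → Fin N, 0 < bw c → S c = 0) :
    ∀ (a' : Fin n → Fin N) (c' : Fin m → Fin N), 0 < bw a' + bw c' →
      (∑ p : Fin N, ∑ q : Fin N,
        ginv p q * T (Fin.snoc a' p) * S (Fin.snoc c' q)) = 0 := by
  intro a' c' h
  refine Finset.sum_eq_zero fun p _ => Finset.sum_eq_zero fun q _ => ?_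
  by_cases hg : ginv p q = 0
  · rw [hg, zero_mul, zero_mul]
  · have hpq := indexWeight_add_eq_zero_of_ginv_ne_zero hg
    have hpos : 0 < bw (Fin.snoc a' p) + bw (Fin.snoc c' q) := by
      rw [bw_snoc, bw_snoc]
      omega
    rw [mul_assoc, mul_eq_zero_of_bw_snoc_add_pos hT hS hpos, mul_zero]
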